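/- arXiv:2207.13573 — 6 statements merged into one kernel-verified Lean document; each statement's English description precedes it below -/
import Mathlib

section
/- Let ρ ∈ (-1,1) and let g(y) = −2·log((√(1+ρy+y²/4) − ρ − y/2)/(1−ρ)). Then g(0) = 0 and g is strictly increasing on ℝ; consequently g(y) > 0 for y > 0, g(y) < 0 for y < 0, and the SABR implied-volatility function f(y) = y/g(y) satisfies f(y) > 0 for every y ≠ 0. -/
lemma key_anti {c t₁ t₂ A₁ A₂ : ℝ} (hc : 0 < c) (h1 : A₁^2 = t₁^2 + c)
    (h2 : A₂^2 = t₂^2 + c) (hA1 : 0 ≤ A₁) (hA2 : 0 ≤ A₂) (ht : t₁ < t₂) :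
    A₂ - t₂ < A₁ - t₁ := by
  have hA1t : |t₁| < A₁ := abs_lt_of_sq_lt_sq (by nlinarith) hA1
  have hA2t : |t₂| < A₂ := abs_lt_of_sq_lt_sq (by nlinarith) hA2
  have h1a := abs_lt.mp hA1t
  have h2a := abs_lt.mp hA2t
  nlinarith [sq_nonneg (t₂*A₁ - t₁*A₂), sq_nonneg (A₁ - A₂), sq_nonneg (A₁ + A₂),
    mul_pos (sub_pos.mpr ht) hc, sq_nonneg (t₁ + t₂), sq_nonneg (t₁ - t₂)]

/-- For ρ ∈ (-1,1), the SABR function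
g(y) = −2·log((√(1+ρy+y²/4) − ρ − y/2)/(1−ρ)) satisfies g(0) = 0 and is strictly
increasing on ℝ; hence g(y) > 0 for y > 0, g(y) < 0 for y < 0, and the SABR
implied-volatility shape function f(y) = y/g(y) is strictly positive for y ≠ 0. -/
theorem stmt_2 (ρ : ℝ) (hρ : ρ ∈ Set.Ioo (-1 : ℝ) 1) (g : ℝ → ℝ)
    (hg : ∀ y : ℝ, g y =
      -2 * Real.log ((Real.sqrt (1 + ρ * y + y ^ 2 / 4) - ρ - y / 2) / (1 - ρ))) :
    g 0 = 0 ∧ StrictMono g ∧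
      (∀ y : ℝ, 0 < y → 0 < g y) ∧
      (∀ y : ℝ, y < 0 → g y < 0) ∧
      (∀ y : ℝ, y ≠ 0 → 0 < y / g y) := by
  obtain ⟨hρ1, hρ2⟩ := hρ
  have hc : (0:ℝ) < 1 - ρ^2 := by nlinarith
  have h1ρ : (0:ℝ) < 1 - ρ := by linarith
  set c := 1 - ρ^2 with hcdef
  -- basic facts about h y := sqrt(1+ρy+y²/4) − ρ − y/2
  have hsq : ∀ y : ℝ, 1 + ρ * y + y ^ 2 / 4 = (y/2 + ρ)^2 + c := by
    intro y; rw [hcdef]; ring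
  have hA : ∀ y : ℝ, (Real.sqrt (1 + ρ * y + y ^ 2 / 4))^2 = (y/2 + ρ)^2 + c := by
    intro y
    rw [Real.sq_sqrt (by nlinarith [sq_nonneg (y/2 + ρ)] : (0:ℝ) ≤ 1 + ρ * y + y ^ 2 / 4)]
    exact hsq y
  have hpos : ∀ y : ℝ, 0 < Real.sqrt (1 + ρ * y + y ^ 2 / 4) - ρ - y / 2 := by
    intro y
    have hAnn := Real.sqrt_nonneg (1 + ρ * y + y ^ 2 / 4)
    have habs : |y/2 + ρ| < Real.sqrt (1 + ρ * y + y ^ 2 / 4) :=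
      abs_lt_of_sq_lt_sq (by rw [hA y]; nlinarith) hAnn
    have := (le_abs_self (y/2 + ρ)).trans_lt habs
    linarith
  -- strict antitonicity of h
  have hanti : ∀ y₁ y₂ : ℝ, y₁ < y₂ →
      Real.sqrt (1 + ρ * y₂ + y₂ ^ 2 / 4) - ρ - y₂ / 2 <
      Real.sqrt (1 + ρ * y₁ + y₁ ^ 2 / 4) - ρ - y₁ / 2 := by
    intro y₁ y₂ hy
    have := key_anti hc (hA y₁) (hA y₂) (Real.sqrt_nonneg _) (Real.sqrt_nonneg _)
      (show y₁/2 + ρ < y₂/2 + ρ by linarith)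
    linarith
  -- strict monotonicity of g
  have hmono : StrictMono g := by
    intro y₁ y₂ hy
    rw [hg y₁, hg y₂]
    have hlog : Real.log ((Real.sqrt (1 + ρ * y₂ + y₂ ^ 2 / 4) - ρ - y₂ / 2) / (1 - ρ)) <
        Real.log ((Real.sqrt (1 + ρ * y₁ + y₁ ^ 2 / 4) - ρ - y₁ / 2) / (1 - ρ)) := by
      exact Real.log_lt_log (div_pos (hpos y₂) h1ρ)
        (div_lt_div_of_pos_right (hanti y₁ y₂ hy) h1ρ)
    linarith
  have hg0 : g 0 = 0 := by
    rw [hg 0]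
    norm_num [div_self h1ρ.ne']
  refine ⟨hg0, hmono, ?_, ?_, ?_⟩
  · intro y hy; have := hmono hy; rwa [hg0] at this
  · intro y hy; have := hmono hy; rwa [hg0] at this
  · intro y hy
    rcases lt_or_gt_of_ne hy with h | h
    · have hgy : g y < 0 := by have := hmono h; rwa [hg0] at this
      exact div_pos_of_neg_of_neg h hgy
    · have hgy : 0 < g y := by have := hmono h; rwa [hg0] at this
      exact div_pos h hgy
end

section
/- Let ρ ∈ (-1,1), let g(y) = −2·log((√(1+ρy+y²/4) − ρ − y/2)/(1−ρ)) and f(y) = y/g(y) for y ≠ 0, f(0) = 1. Then lim_{y→0} (f(y) − 1)/y = ρ/4; that is, f is differentiable at 0 with f'(0) = ρ/4, which is the first-order approximation f(y) ≈ 1 + (ρ/4)·y of the SABR implied volatility. -/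
open Filter Topology

/-!
Write `g(y) = y - (ρ/4) y² + o(y²)`. Then `f(y) - 1 = (y - g y) / g y ~ (ρ/4) y`. The expansion
of `g` comes from its derivative `g'(y) = 1 / √(1 + ρy + y²/4)`, which is `1` at `0` with
derivative `-ρ/2` there; L'Hôpital's rule turns this into `(y - g y) / y² → ρ/4`.
-/

theorem tendsto_sub_div_sq_of_hasDerivAt {g g' : ℝ → ℝ} {c : ℝ}
    (hg : ∀ᶠ y in 𝓝 0, HasDerivAt g (g' y) y) (hg0 : g 0 = 0) (hg'0 : g' 0 = 1)
    (hg' : HasDerivAt g' c 0) :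
    Tendsto (fun y => (y - g y) / y ^ 2) (𝓝[≠] 0) (𝓝 (-c / 2)) := by
  have hsub : HasDerivAt (fun y => y - g y) (1 - g' 0) 0 := (hasDerivAt_id 0).sub hg.self_of_nhds
  refine HasDerivAt.lhopital_zero_nhdsNE (f' := fun y => 1 - g' y) (g' := fun y => 2 * y)
    ?_ ?_ ?_ ?_ ?_ ?_
  · exact (hg.mono fun y hy => (hasDerivAt_id y).sub hy).filter_mono nhdsWithin_le_nhds
  · exact Eventually.of_forall fun y => by simpa using hasDerivAt_pow 2 y
  · filter_upwards [self_mem_nhdsWithin] with y hy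
    exact mul_ne_zero two_ne_zero hy
  · simpa [hg0] using hsub.continuousAt.tendsto.mono_left nhdsWithin_le_nhds
  · simpa using ((continuous_pow 2).tendsto (0 : ℝ)).mono_left nhdsWithin_le_nhds
  · have hslope := (hg'.tendsto_slope.const_mul (-1 / 2 : ℝ))
    rw [show -1 / 2 * c = -c / 2 by ring] at hslope
    refine hslope.congr fun y => ?_
    rw [slope_def_field, hg'0]
    ring

theorem tendsto_div_self_sub_one_div {g : ℝ → ℝ} {L : ℝ} (hg : HasDerivAt g 1 0) (hg0 : g 0 = 0)
    (h : Tendsto (fun y => (y - g y) / y ^ 2) (𝓝[≠] 0) (𝓝 L)) :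
    Tendsto (fun y => (y / g y - 1) / y) (𝓝[≠] 0) (𝓝 L) := by
  have hslope : Tendsto (fun y => g y / y) (𝓝[≠] 0) (𝓝 1) :=
    hg.tendsto_slope.congr fun y => by simp [slope_def_field, hg0]
  have hne : ∀ᶠ y in 𝓝[≠] 0, g y / y ≠ 0 := hslope.eventually_ne one_ne_zero
  have hprod := h.mul (hslope.inv₀ one_ne_zero)
  rw [inv_one, mul_one] at hprod
  refine hprod.congr' ?_
  filter_upwards [self_mem_nhdsWithin, hne] with y (hy : y ≠ 0) hgy
  have hgy : g y ≠ 0 := (div_ne_zero_iff.mp hgy).1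
  field_simp

noncomputable def sabrRadicand (ρ y : ℝ) : ℝ := 1 + ρ * y + y ^ 2 / 4

noncomputable def sabrG (ρ y : ℝ) : ℝ :=
  -2 * Real.log ((√(sabrRadicand ρ y) - ρ - y / 2) / (1 - ρ))

section Sabr

variable {ρ : ℝ}

theorem sabrRadicand_eq (ρ y : ℝ) : sabrRadicand ρ y = (ρ + y / 2) ^ 2 + (1 - ρ ^ 2) := by
  unfold sabrRadicand; ring

theorem sabrRadicand_zero (ρ : ℝ) : sabrRadicand ρ 0 = 1 := by
  simp [sabrRadicand]

theorem sq_lt_sabrRadicand (hρ : ρ ^ 2 < 1) (y : ℝ) : (ρ + y / 2) ^ 2 < sabrRadicand ρ y := by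
  rw [sabrRadicand_eq]; linarith

theorem sabrRadicand_pos (hρ : ρ ^ 2 < 1) (y : ℝ) : 0 < sabrRadicand ρ y :=
  (sq_nonneg _).trans_lt (sq_lt_sabrRadicand hρ y)

theorem sqrt_sabrRadicand_sub_pos (hρ : ρ ^ 2 < 1) (y : ℝ) :
    0 < √(sabrRadicand ρ y) - ρ - y / 2 := by
  have h : |ρ + y / 2| < √(sabrRadicand ρ y) := by
    rw [← Real.sqrt_sq_eq_abs]
    exact Real.sqrt_lt_sqrt (sq_nonneg _) (sq_lt_sabrRadicand hρ y)
  linarith [le_abs_self (ρ + y / 2)]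

theorem hasDerivAt_sabrRadicand (ρ y : ℝ) : HasDerivAt (sabrRadicand ρ) (ρ + y / 2) y := by
  have h := (((hasDerivAt_id' y).const_mul ρ).const_add 1).add ((hasDerivAt_pow 2 y).div_const 4)
  exact h.congr_deriv (by norm_num; ring)

/-- The numerator `N` of the logarithm's argument solves `N' = -N / (2√R)`, which makes the
logarithmic derivative of `N` equal to `-1 / (2√R)`. -/
theorem hasDerivAt_sqrt_sabrRadicand_sub (hρ : ρ ^ 2 < 1) (y : ℝ) :
    HasDerivAt (fun y => √(sabrRadicand ρ y) - ρ - y / 2)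
      (-(√(sabrRadicand ρ y) - ρ - y / 2) / (2 * √(sabrRadicand ρ y))) y := by
  have hR := sabrRadicand_pos hρ y
  have hsqrt := (hasDerivAt_sabrRadicand ρ y).sqrt hR.ne'
  refine ((hsqrt.sub_const ρ).sub ((hasDerivAt_id' y).div_const 2)).congr_deriv ?_
  have hsqrt_ne : √(sabrRadicand ρ y) ≠ 0 := (Real.sqrt_pos.2 hR).ne'
  field_simp
  ring

theorem hasDerivAt_sabrG (hρ : ρ ∈ Set.Ioo (-1 : ℝ) 1) (y : ℝ) :
    HasDerivAt (sabrG ρ) (√(sabrRadicand ρ y))⁻¹ y := by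
  have hρ2 : ρ ^ 2 < 1 := by nlinarith [hρ.1, hρ.2]
  have h1ρ : 1 - ρ ≠ 0 := by linarith [hρ.2]
  have hN := sqrt_sabrRadicand_sub_pos hρ2 y
  have hlog := (((hasDerivAt_sqrt_sabrRadicand_sub hρ2 y).div_const (1 - ρ)).log
    (div_ne_zero hN.ne' h1ρ)).const_mul (-2)
  refine hlog.congr_deriv ?_
  generalize √(sabrRadicand ρ y) - ρ - y / 2 = N at hN ⊢
  field_simp

theorem sabrG_zero (hρ : ρ ≠ 1) : sabrG ρ 0 = 0 := by
  have h1ρ : 1 - ρ ≠ 0 := sub_ne_zero.2 hρ.symm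
  simp [sabrG, sabrRadicand_zero, div_self h1ρ]

theorem hasDerivAt_inv_sqrt_sabrRadicand_zero (ρ : ℝ) :
    HasDerivAt (fun y => (√(sabrRadicand ρ y))⁻¹) (-(ρ / 2)) 0 := by
  have hsqrt := (hasDerivAt_sabrRadicand ρ 0).sqrt (by simp [sabrRadicand_zero])
  refine (hsqrt.inv (by simp [sabrRadicand_zero])).congr_deriv ?_
  simp [sabrRadicand_zero]

end Sabr

/-- For ρ ∈ (-1,1), with
g(y) = −2·log((√(1+ρy+y²/4) − ρ − y/2)/(1−ρ)) and f(y) = y/g(y) for y ≠ 0, f(0) = 1,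
one has lim_{y→0} (f(y) − 1)/y = ρ/4; that is, f is differentiable at 0 with
f'(0) = ρ/4 (the first-order approximation f(y) ≈ 1 + (ρ/4)y). -/
theorem stmt_4 (ρ : ℝ) (hρ : ρ ∈ Set.Ioo (-1 : ℝ) 1) (g f : ℝ → ℝ)
    (hg : ∀ y : ℝ, g y =
      -2 * Real.log ((Real.sqrt (1 + ρ * y + y ^ 2 / 4) - ρ - y / 2) / (1 - ρ)))
    (hf : ∀ y : ℝ, f y = if y = 0 then 1 else y / g y) :
    Tendsto (fun y : ℝ => (f y - 1) / y) (𝓝[≠] 0) (𝓝 (ρ / 4)) ∧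
      HasDerivAt f (ρ / 4) 0 := by
  obtain rfl : g = sabrG ρ := funext hg
  have hg0 : sabrG ρ 0 = 0 := sabrG_zero hρ.2.ne
  have hexpansion : Tendsto (fun y => (y - sabrG ρ y) / y ^ 2) (𝓝[≠] 0) (𝓝 (ρ / 4)) := by
    convert tendsto_sub_div_sq_of_hasDerivAt (.of_forall (hasDerivAt_sabrG hρ)) hg0
      (by simp [sabrRadicand_zero]) (hasDerivAt_inv_sqrt_sabrRadicand_zero ρ) using 2
    ring
  have hderiv0 : HasDerivAt (sabrG ρ) 1 0 := by
    simpa [sabrRadicand_zero] using hasDerivAt_sabrG hρ 0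
  have hlim : Tendsto (fun y => (f y - 1) / y) (𝓝[≠] 0) (𝓝 (ρ / 4)) := by
    refine (tendsto_div_self_sub_one_div hderiv0 hg0 hexpansion).congr' ?_
    filter_upwards [self_mem_nhdsWithin] with y (hy : y ≠ 0)
    rw [hf, if_neg hy]
  refine ⟨hlim, hasDerivAt_iff_tendsto_slope.2 (hlim.congr fun y => ?_)⟩
  simp [slope_def_field, hf 0]
end

section
/- For every H ∈ [0, 1/2] and ρ ∈ (−1,1), the first-order relative reduction RelRed(ρ,H) = 1 − (H+3/2)·√((1−ρ²)/((H+3/2)² − 2(H+1)ρ²)) satisfies 0 ≤ RelRed(ρ,H) < 1, and RelRed(ρ,H) = 0 if and only if ρ = 0. -/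
/-- For H ∈ [0,1/2] and ρ ∈ (−1,1), the first-order relative reduction
RelRed(ρ,H) = 1 − (H+3/2)·√((1−ρ²)/((H+3/2)² − 2(H+1)ρ²)) satisfies
0 ≤ RelRed(ρ,H) < 1, and RelRed(ρ,H) = 0 iff ρ = 0. -/
theorem stmt_9 (RelRed : ℝ → ℝ → ℝ)
    (hRelRed : ∀ ρ H : ℝ, RelRed ρ H =
      1 - (H + 3 / 2) *
        Real.sqrt ((1 - ρ ^ 2) / ((H + 3 / 2) ^ 2 - 2 * (H + 1) * ρ ^ 2))) :
    ∀ H : ℝ, H ∈ Set.Icc (0 : ℝ) (1 / 2) →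
      ∀ ρ : ℝ, ρ ∈ Set.Ioo (-1 : ℝ) 1 →
        0 ≤ RelRed ρ H ∧ RelRed ρ H < 1 ∧ (RelRed ρ H = 0 ↔ ρ = 0) := by
  intro H hH ρ hρ
  obtain ⟨hH0, hH1⟩ := hH
  obtain ⟨hρ1, hρ2⟩ := hρ
  have hc : (0:ℝ) < H + 3 / 2 := by linarith
  have hnum : (0:ℝ) < 1 - ρ ^ 2 := by nlinarith
  have hD : (0:ℝ) < (H + 3 / 2) ^ 2 - 2 * (H + 1) * ρ ^ 2 := by
    nlinarith [sq_nonneg ρ, sq_nonneg (ρ * (H + 1/2))]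
  have hx : (0:ℝ) < (1 - ρ ^ 2) / ((H + 3 / 2) ^ 2 - 2 * (H + 1) * ρ ^ 2) :=
    div_pos hnum hD
  have hs : 0 < Real.sqrt ((1 - ρ ^ 2) / ((H + 3 / 2) ^ 2 - 2 * (H + 1) * ρ ^ 2)) :=
    Real.sqrt_pos.mpr hx
  have hsq : (Real.sqrt ((1 - ρ ^ 2) / ((H + 3 / 2) ^ 2 - 2 * (H + 1) * ρ ^ 2))) ^ 2
      = (1 - ρ ^ 2) / ((H + 3 / 2) ^ 2 - 2 * (H + 1) * ρ ^ 2) :=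
    Real.sq_sqrt hx.le
  have h1 : (H + 3 / 2) ^ 2 * ((1 - ρ ^ 2) / ((H + 3 / 2) ^ 2 - 2 * (H + 1) * ρ ^ 2)) ≤ 1 := by
    rw [mul_div_assoc']
    exact (div_le_one hD).mpr (by nlinarith [mul_nonneg (sq_nonneg (H + 1/2)) (sq_nonneg ρ)])
  have key : (H + 3 / 2) * Real.sqrt ((1 - ρ ^ 2) / ((H + 3 / 2) ^ 2 - 2 * (H + 1) * ρ ^ 2)) ≤ 1 := by
    calc (H + 3 / 2) * Real.sqrt ((1 - ρ ^ 2) / ((H + 3 / 2) ^ 2 - 2 * (H + 1) * ρ ^ 2))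
        = Real.sqrt ((H + 3 / 2) ^ 2 * ((1 - ρ ^ 2) / ((H + 3 / 2) ^ 2 - 2 * (H + 1) * ρ ^ 2))) := by
          rw [Real.sqrt_mul (sq_nonneg _), Real.sqrt_sq hc.le]
      _ ≤ Real.sqrt 1 := Real.sqrt_le_sqrt h1
      _ = 1 := Real.sqrt_one
  rw [hRelRed]
  refine ⟨by linarith, by nlinarith [mul_pos hc hs], ?_⟩
  constructor
  · intro h
    have hmul : (H + 3 / 2) * Real.sqrt ((1 - ρ ^ 2) / ((H + 3 / 2) ^ 2 - 2 * (H + 1) * ρ ^ 2)) = 1 := by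
      linarith
    have h2 : (H + 3 / 2) ^ 2 * ((1 - ρ ^ 2) / ((H + 3 / 2) ^ 2 - 2 * (H + 1) * ρ ^ 2)) = 1 := by
      nlinarith [hsq]
    rw [mul_div_assoc'] at h2
    have h3 : (H + 3 / 2) ^ 2 * (1 - ρ ^ 2) = (H + 3 / 2) ^ 2 - 2 * (H + 1) * ρ ^ 2 :=
      (div_eq_one_iff_eq hD.ne').mp h2
    have hρ0 : ρ ^ 2 = 0 := by
      nlinarith [sq_nonneg ρ, mul_nonneg (sq_nonneg H) (sq_nonneg ρ),
        mul_nonneg hH0 (sq_nonneg ρ)]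
    exact (pow_eq_zero_iff (two_ne_zero)).mp hρ0
  · intro h
    subst h
    have e : (1 - (0:ℝ) ^ 2) / ((H + 3 / 2) ^ 2 - 2 * (H + 1) * (0:ℝ) ^ 2)
        = ((H + 3 / 2) ^ 2)⁻¹ := by norm_num
    rw [e, Real.sqrt_inv, Real.sqrt_sq hc.le, mul_inv_cancel₀ hc.ne']
    ring
end

section
/- Fix ρ with 0 < |ρ| < 1. Then the ratio r(H) = (1−ρ²)/(1 − 2ρ²(H+1)/(H+3/2)²) of the first-order mean-square hedging errors of the variance-optimal and Delta strategies is strictly decreasing in H on [0, 1/2]; equivalently, the relative reduction RelRed(ρ,H) = 1 − (H+3/2)·√((1−ρ²)/((H+3/2)² − 2(H+1)ρ²)) is strictly increasing in H on [0, 1/2]. In particular, the effectiveness of variance-optimal hedging relative to Delta hedging is largest in the SABR case H = 1/2 and smallest in very rough models with H close to 0. -/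
lemma stmt11_key (a b : ℝ) (ha : 0 ≤ a) (hab : a < b) :
    (b + 1) * (a + 3 / 2) ^ 2 < (a + 1) * (b + 3 / 2) ^ 2 := by
  nlinarith [mul_pos (sub_pos.mpr hab)
    (show (0:ℝ) < a * b + a + b + 3 / 4 by nlinarith)]

/-- Fix ρ with 0 < |ρ| < 1. Then the first-order MSHE ratio
r(H) = (1−ρ²)/(1 − 2ρ²(H+1)/(H+3/2)²) is strictly decreasing in H on [0,1/2];
equivalently, RelRed(ρ,H) = 1 − (H+3/2)·√((1−ρ²)/((H+3/2)² − 2(H+1)ρ²)) is strictly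
increasing in H on [0,1/2]. -/
theorem stmt_11 (ρ : ℝ) (hρ0 : 0 < |ρ|) (hρ1 : |ρ| < 1) :
    StrictAntiOn
        (fun H : ℝ => (1 - ρ ^ 2) / (1 - 2 * ρ ^ 2 * (H + 1) / (H + 3 / 2) ^ 2))
        (Set.Icc (0 : ℝ) (1 / 2)) ∧
      StrictMonoOn
        (fun H : ℝ => 1 - (H + 3 / 2) *
          Real.sqrt ((1 - ρ ^ 2) / ((H + 3 / 2) ^ 2 - 2 * (H + 1) * ρ ^ 2)))
        (Set.Icc (0 : ℝ) (1 / 2)) := by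
  have hρsq : 0 < ρ ^ 2 := by nlinarith [sq_abs ρ]
  have hρsq1 : ρ ^ 2 < 1 := by nlinarith [sq_abs ρ]
  -- denominator positivity facts
  have hden : ∀ H : ℝ, 0 ≤ H → 0 < (H + 3 / 2) ^ 2 - 2 * (H + 1) * ρ ^ 2 := by
    intro H hH
    nlinarith [sq_nonneg (H + 1/2), mul_pos (show (0:ℝ) < 2*(H+1) by nlinarith) hρsq]
  have hsq : ∀ H : ℝ, 0 ≤ H → (0:ℝ) < (H + 3/2) ^ 2 := by intro H hH; nlinarith
  constructor
  · intro a ha b hb hab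
    simp only
    have hDa : 0 < 1 - 2 * ρ ^ 2 * (a + 1) / (a + 3 / 2) ^ 2 := by
      rw [sub_pos, div_lt_one (hsq a ha.1)]
      nlinarith [hden a ha.1]
    have hDb : 1 - 2 * ρ ^ 2 * (a + 1) / (a + 3 / 2) ^ 2
        < 1 - 2 * ρ ^ 2 * (b + 1) / (b + 3 / 2) ^ 2 := by
      have : 2 * ρ ^ 2 * (b + 1) / (b + 3 / 2) ^ 2
          < 2 * ρ ^ 2 * (a + 1) / (a + 3 / 2) ^ 2 := by
        rw [div_lt_div_iff₀ (hsq b hb.1) (hsq a ha.1)]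
        nlinarith [stmt11_key a b ha.1 hab]
      linarith
    exact div_lt_div_of_pos_left (by linarith) hDa hDb
  · intro a ha b hb hab
    simp only
    have hda := hden a ha.1
    have hdb := hden b hb.1
    have hpa : (0:ℝ) < a + 3/2 := by linarith [ha.1]
    have hpb : (0:ℝ) < b + 3/2 := by linarith [hb.1]
    have key : (b + 3 / 2) * Real.sqrt ((1 - ρ ^ 2) / ((b + 3 / 2) ^ 2 - 2 * (b + 1) * ρ ^ 2))
        < (a + 3 / 2) * Real.sqrt ((1 - ρ ^ 2) / ((a + 3 / 2) ^ 2 - 2 * (a + 1) * ρ ^ 2)) := by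
      have ea : (a + 3 / 2) * Real.sqrt ((1 - ρ ^ 2) / ((a + 3 / 2) ^ 2 - 2 * (a + 1) * ρ ^ 2))
          = Real.sqrt ((a + 3/2)^2 * ((1 - ρ ^ 2) / ((a + 3 / 2) ^ 2 - 2 * (a + 1) * ρ ^ 2))) := by
        rw [Real.sqrt_mul (by positivity), Real.sqrt_sq hpa.le]
      have eb : (b + 3 / 2) * Real.sqrt ((1 - ρ ^ 2) / ((b + 3 / 2) ^ 2 - 2 * (b + 1) * ρ ^ 2))
          = Real.sqrt ((b + 3/2)^2 * ((1 - ρ ^ 2) / ((b + 3 / 2) ^ 2 - 2 * (b + 1) * ρ ^ 2))) := by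
        rw [Real.sqrt_mul (by positivity), Real.sqrt_sq hpb.le]
      rw [ea, eb]
      apply Real.sqrt_lt_sqrt (mul_nonneg (sq_nonneg _) (div_nonneg (by linarith) hdb.le))
      rw [mul_div_assoc', mul_div_assoc', div_lt_div_iff₀ hdb hda]
      nlinarith [stmt11_key a b ha.1 hab, mul_pos hρsq (stmt11_key a b ha.1 hab |> sub_pos.mpr)]
    linarith
end

section
/- Fix H ∈ [0, 1/2]. Then the map ρ ↦ RelRed(ρ,H) = 1 − (H+3/2)·√((1−ρ²)/((H+3/2)² − 2(H+1)ρ²)) is strictly increasing on [0, 1). -/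
/-- Fix H ∈ [0,1/2]. Then
ρ ↦ RelRed(ρ,H) = 1 − (H+3/2)·√((1−ρ²)/((H+3/2)² − 2(H+1)ρ²)) is strictly
increasing on [0,1). -/
theorem stmt_12 (H : ℝ) (hH : H ∈ Set.Icc (0 : ℝ) (1 / 2)) :
    StrictMonoOn
      (fun ρ : ℝ => 1 - (H + 3 / 2) *
        Real.sqrt ((1 - ρ ^ 2) / ((H + 3 / 2) ^ 2 - 2 * (H + 1) * ρ ^ 2)))
      (Set.Ico (0 : ℝ) 1) := by
  obtain ⟨hH0, hH1⟩ := hH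
  intro x ⟨hx0, hx1⟩ y ⟨hy0, hy1⟩ hxy
  have hc : (0 : ℝ) < H + 3 / 2 := by linarith
  have hx2 : x ^ 2 < 1 := by nlinarith
  have hy2 : y ^ 2 < 1 := by nlinarith
  have hdx : 0 < (H + 3 / 2) ^ 2 - 2 * (H + 1) * x ^ 2 := by nlinarith
  have hdy : 0 < (H + 3 / 2) ^ 2 - 2 * (H + 1) * y ^ 2 := by nlinarith
  have hxy2 : x ^ 2 < y ^ 2 := by nlinarith
  have hkey : (1 - y ^ 2) / ((H + 3 / 2) ^ 2 - 2 * (H + 1) * y ^ 2)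
      < (1 - x ^ 2) / ((H + 3 / 2) ^ 2 - 2 * (H + 1) * x ^ 2) := by
    rw [div_lt_div_iff₀ hdy hdx]
    nlinarith [mul_pos (sub_pos.mpr hxy2) (show (0:ℝ) < (H + 1 / 2) ^ 2 by positivity)]
  have hgy : 0 ≤ (1 - y ^ 2) / ((H + 3 / 2) ^ 2 - 2 * (H + 1) * y ^ 2) :=
    div_nonneg (by linarith) hdy.le
  have hs := Real.sqrt_lt_sqrt hgy hkey
  simp only
  nlinarith [hs, hc]
end

section
/- Let ρ ∈ (−1,1) and let G₀(y) = log(1 + 2ρy + y²) + (2ρ/√(1−ρ²))·(arctan(ρ/√(1−ρ²)) − arctan((y+ρ)/√(1−ρ²))). Then G₀(0) = 0, G₀ is strictly decreasing on (−∞, 0] and strictly increasing on [0, ∞); in particular G₀(y) > 0 for every y ≠ 0, so the implied-volatility shape function f(y) = |y|/√(G₀(y)) is well-defined and positive for y ≠ 0. -/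
/-! Writing `1 + 2ρy + y² = (y + ρ)² + s²` with `s = √(1 - ρ²) > 0`, the derivative of the
arctangent term cancels the `ρ`-part of the derivative of the logarithm, leaving
`G₀'(y) = 2y / (1 + 2ρy + y²)`, which has the sign of `y`. Since `G₀(0) = 0`, monotonicity on
each half-line gives `G₀ > 0` away from the origin. -/

open Real Set

theorem hasDerivAt_arctan_div_of_add (ρ : ℝ) {s : ℝ} (hs : s ≠ 0) (y : ℝ) :
    HasDerivAt (fun y => arctan ((y + ρ) / s)) (s / ((y + ρ) ^ 2 + s ^ 2)) y := by
  have hinner : HasDerivAt (fun y : ℝ => (y + ρ) / s) (1 / s) y := by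
    simpa using ((hasDerivAt_id y).add_const ρ).div_const s
  refine ((hasDerivAt_arctan ((y + ρ) / s)).comp y hinner).congr_deriv ?_
  field_simp
  ring

theorem hasDerivAt_log_sub_arctan (ρ : ℝ) {s : ℝ} (hs : s ≠ 0) (y : ℝ) :
    HasDerivAt (fun y => log ((y + ρ) ^ 2 + s ^ 2) - 2 * ρ / s * arctan ((y + ρ) / s))
      (2 * y / ((y + ρ) ^ 2 + s ^ 2)) y := by
  have hQ : (y + ρ) ^ 2 + s ^ 2 ≠ 0 := by positivity
  have hlog : HasDerivAt (fun y => log ((y + ρ) ^ 2 + s ^ 2))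
      (2 * (y + ρ) / ((y + ρ) ^ 2 + s ^ 2)) y := by
    have hsq : HasDerivAt (fun y : ℝ => (y + ρ) ^ 2 + s ^ 2) (2 * (y + ρ)) y := by
      simpa using (((hasDerivAt_id y).add_const ρ).pow 2).add_const (s ^ 2)
    exact hsq.log hQ
  refine (hlog.sub ((hasDerivAt_arctan_div_of_add ρ hs y).const_mul (2 * ρ / s))).congr_deriv ?_
  field_simp
  ring

theorem strictAntiOn_Iic_zero_of_hasDerivAt {f f' : ℝ → ℝ} (hf : ∀ y, HasDerivAt f (f' y) y)
    (hneg : ∀ y < 0, f' y < 0) :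
    StrictAntiOn f (Iic 0) := by
  refine strictAntiOn_of_deriv_neg (convex_Iic 0)
    (fun y _ => (hf y).continuousAt.continuousWithinAt) fun y hy => ?_
  rw [interior_Iic] at hy
  exact (hf y).deriv ▸ hneg y hy

theorem strictMonoOn_Ici_zero_of_hasDerivAt {f f' : ℝ → ℝ} (hf : ∀ y, HasDerivAt f (f' y) y)
    (hpos : ∀ y > 0, 0 < f' y) :
    StrictMonoOn f (Ici 0) := by
  refine strictMonoOn_of_deriv_pos (convex_Ici 0)
    (fun y _ => (hf y).continuousAt.continuousWithinAt) fun y hy => ?_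
  rw [interior_Ici] at hy
  exact (hf y).deriv ▸ hpos y hy

theorem pos_of_ne_zero_of_strictAntiOn_of_strictMonoOn {f : ℝ → ℝ} (h0 : f 0 = 0)
    (hanti : StrictAntiOn f (Iic 0)) (hmono : StrictMonoOn f (Ici 0)) {y : ℝ} (hy : y ≠ 0) :
    0 < f y := by
  rw [← h0]
  rcases hy.lt_or_gt with hy | hy
  · exact hanti (mem_Iic.mpr hy.le) self_mem_Iic hy
  · exact hmono self_mem_Ici (mem_Ici.mpr hy.le) hy

/-- For ρ ∈ (−1,1), the function
G₀(y) = log(1 + 2ρy + y²) + (2ρ/√(1−ρ²))·(arctan(ρ/√(1−ρ²)) − arctan((y+ρ)/√(1−ρ²)))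
satisfies G₀(0) = 0, is strictly decreasing on (−∞,0] and strictly increasing on
[0,∞); in particular G₀(y) > 0 for y ≠ 0, so f(y) = |y|/√(G₀(y)) is well-defined
and positive for y ≠ 0. -/
theorem stmt_17 (ρ : ℝ) (hρ : ρ ∈ Set.Ioo (-1 : ℝ) 1) (G₀ : ℝ → ℝ)
    (hG₀ : ∀ y : ℝ, G₀ y =
      Real.log (1 + 2 * ρ * y + y ^ 2) +
        (2 * ρ / Real.sqrt (1 - ρ ^ 2)) *
          (Real.arctan (ρ / Real.sqrt (1 - ρ ^ 2)) -
            Real.arctan ((y + ρ) / Real.sqrt (1 - ρ ^ 2)))) :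
    G₀ 0 = 0 ∧
      StrictAntiOn G₀ (Set.Iic (0 : ℝ)) ∧
      StrictMonoOn G₀ (Set.Ici (0 : ℝ)) ∧
      ∀ y : ℝ, y ≠ 0 → 0 < G₀ y ∧ 0 < |y| / Real.sqrt (G₀ y) := by
  set s := √(1 - ρ ^ 2)
  have hs : 0 < s := sqrt_pos.mpr (by nlinarith [hρ.1, hρ.2])
  have hsq : s ^ 2 = 1 - ρ ^ 2 := sq_sqrt (by nlinarith [hρ.1, hρ.2])
  have hQ : ∀ y : ℝ, 1 + 2 * ρ * y + y ^ 2 = (y + ρ) ^ 2 + s ^ 2 := fun y => by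
    rw [hsq]; ring
  have hG : G₀ = fun y =>
      (log ((y + ρ) ^ 2 + s ^ 2) - 2 * ρ / s * arctan ((y + ρ) / s)) +
        2 * ρ / s * arctan (ρ / s) := funext fun y => by
    rw [hG₀, hQ]
    ring
  have hderiv : ∀ y, HasDerivAt G₀ (2 * y / ((y + ρ) ^ 2 + s ^ 2)) y := fun y => by
    rw [hG]
    exact (hasDerivAt_log_sub_arctan ρ hs.ne' y).add_const _
  have h0 : G₀ 0 = 0 := by simp [hG₀]
  have hanti := strictAntiOn_Iic_zero_of_hasDerivAt hderiv fun y hy =>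
    div_neg_of_neg_of_pos (by linarith) (by positivity)
  have hmono := strictMonoOn_Ici_zero_of_hasDerivAt hderiv fun y hy =>
    div_pos (by linarith) (by positivity)
  refine ⟨h0, hanti, hmono, fun y hy => ?_⟩
  have hpos := pos_of_ne_zero_of_strictAntiOn_of_strictMonoOn h0 hanti hmono hy
  exact ⟨hpos, div_pos (abs_pos.mpr hy) (sqrt_pos.mpr hpos)⟩
end
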